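/- Let B, G be finite subsets of ℝ/ℤ with |B| = |G| = n, and R̃ ⊆ ℝ/ℤ with |R̃| < (3/2)n and B + G ⊆ −R̃. Then there exists k < (3/2)n and a finite cyclic subgroup H of ℝ/ℤ of order k such that B and G are each contained in cosets of H. -/

import Mathlib

/-!
If `2|B + G| < 3|B|` and `2|B + G| < 3|G|`, then for `c, c' ∈ G` the translates `c + B` and
`c' + B` both lie in `B + G`, so they overlap in more than `|B|/2` points: every element of
`G - G` has more than `|B|/2` representations as a difference of elements of `B`, and
symmetrically. Hence `B - B = G - G`; this set is closed under addition, because two subsets of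
`x + B` of size more than `|B|/2` must meet; and counting representations gives
`|B - B| < |B| + |G|`, so by pigeonhole a whole translate of the subgroup `B - B` lies in `B + G`.
Finite subgroups of `ℝ/ℤ` are cyclic since they embed in the unit circle of `ℂ`.
-/

open Pointwise

namespace Finset

variable {α : Type*} [AddCommGroup α] [DecidableEq α] {A B C G S : Finset α} {x y : α}

lemma inter_vadd_nonempty_iff : (A ∩ (x +ᵥ B)).Nonempty ↔ x ∈ A - B := by
  rw [← card_pos, card_inter_vadd, addConvolution_pos, sub_eq_add_neg]

lemma sum_card_inter_vadd (A : Finset α) : ∑ x ∈ A - A, #(A ∩ (x +ᵥ A)) = #A * #A := by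
  rw [← card_product, card_eq_sum_card_fiberwise (f := fun p ↦ p.1 - p.2) (t := A - A)]
  · simp only [card_inter_vadd, card_sub_eq]
  · rintro p hp
    rw [mem_coe, mem_product] at hp
    exact sub_mem_sub hp.1 hp.2

lemma two_mul_card_le_card_add_add_card_inter_vadd (hx : x ∈ C - C) :
    2 * #A ≤ #(A + C) + #(A ∩ (x +ᵥ A)) := by
  obtain ⟨c, hc, c', hc', rfl⟩ := mem_sub.1 hx
  have hunion : (c' +ᵥ A) ∪ (c +ᵥ A) ⊆ A + C := by
    rw [add_comm]
    exact union_subset (vadd_finset_subset_add hc') (vadd_finset_subset_add hc)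
  have hinter : #((c' +ᵥ A) ∩ (c +ᵥ A)) = #(A ∩ ((c - c') +ᵥ A)) := by
    rw [card_vadd_inter_vadd, card_inter_vadd, neg_add_eq_sub]
  have := card_union_add_card_inter (c' +ᵥ A) (c +ᵥ A)
  rw [card_vadd_finset, card_vadd_finset, hinter] at this
  have := card_le_card hunion
  omega

lemma card_lt_two_mul_card_inter_vadd (h : 2 * #(A + C) < 3 * #A) (hx : x ∈ C - C) :
    #A < 2 * #(A ∩ (x +ᵥ A)) := by
  have := two_mul_card_le_card_add_add_card_inter_vadd (A := A) hx
  omega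

lemma sub_subset_sub_of_two_mul_card_add_lt (h : 2 * #(A + C) < 3 * #A) : C - C ⊆ A - A :=
  fun x hx ↦ inter_vadd_nonempty_iff.1 <| card_pos.1 <| by
    have := card_lt_two_mul_card_inter_vadd h hx
    omega

lemma add_mem_sub_of_card_lt_two_mul_card_inter_vadd
    (h : ∀ x ∈ A - A, #A < 2 * #(A ∩ (x +ᵥ A))) (hx : x ∈ A - A) (hy : y ∈ A - A) :
    x + y ∈ A - A := by
  have hxA := h x hx
  have hyA := h y hy
  obtain ⟨z, hz⟩ := inter_nonempty_of_card_lt_card_add_card (s := x +ᵥ A)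
    (t := A ∩ (x +ᵥ A)) (u := x +ᵥ (A ∩ (y +ᵥ A)))
    inter_subset_right (vadd_finset_subset_vadd_finset inter_subset_left)
    (by rw [card_vadd_finset, card_vadd_finset]; omega)
  rw [mem_inter] at hz
  refine inter_vadd_nonempty_iff.1 ⟨z, mem_inter.2 ⟨(mem_inter.1 hz.1).1, ?_⟩⟩
  rw [← vadd_vadd]
  exact vadd_finset_subset_vadd_finset inter_subset_right hz.2

lemma card_sub_lt_two_mul_card (hA : A.Nonempty)
    (h : ∀ x ∈ A - A, #A < 2 * #(A ∩ (x +ᵥ A))) :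
    #(A - A) < 2 * #A := by
  refine Nat.lt_of_mul_lt_mul_right (a := #A) ?_
  calc #(A - A) * #A = ∑ _x ∈ A - A, #A := by rw [sum_const, smul_eq_mul]
    _ < ∑ x ∈ A - A, 2 * #(A ∩ (x +ᵥ A)) := sum_lt_sum_of_nonempty (hA.sub hA) h
    _ = 2 * #A * #A := by rw [← mul_sum, sum_card_inter_vadd, mul_assoc]

lemma vadd_subset_add_of_card_lt (hS : ∀ x ∈ S, ∀ y ∈ S, x + y ∈ S) (hBS : B - B ⊆ S)
    (hGS : G - G ⊆ S) (hcard : #S < #B + #G) {b g : α} (hb : b ∈ B) (hg : g ∈ G) :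
    (b + g) +ᵥ S ⊆ B + G := by
  intro z hz
  obtain ⟨t, ht, rfl⟩ := mem_vadd_finset.1 hz
  have hB' : -b +ᵥ B ⊆ S := fun u hu ↦ by
    obtain ⟨x, hx, rfl⟩ := mem_vadd_finset.1 hu
    simpa [neg_add_eq_sub] using hBS (sub_mem_sub hx hb)
  have hG' : (t + g) +ᵥ -G ⊆ S := fun u hu ↦ by
    obtain ⟨y, hy, rfl⟩ := mem_vadd_finset.1 hu
    have := hS t ht _ (hGS (sub_mem_sub hg (mem_neg'.1 hy)))
    simpa [add_assoc, sub_eq_add_neg] using this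
  obtain ⟨u, hu⟩ := inter_nonempty_of_card_lt_card_add_card hB' hG'
    (by rwa [card_vadd_finset, card_vadd_finset, card_neg])
  rw [mem_inter, mem_vadd_finset, mem_vadd_finset] at hu
  obtain ⟨⟨x, hx, rfl⟩, ⟨y, hy, hxy⟩⟩ := hu
  refine mem_add.2 ⟨x, hx, -y, mem_neg'.1 hy, ?_⟩
  simp only [vadd_eq_add] at hxy ⊢
  linear_combination (norm := abel) -hxy

lemma subset_vadd_sub {b : α} (hb : b ∈ B) : B ⊆ b +ᵥ (B - B) := fun x hx ↦
  mem_vadd_finset.2 ⟨x - b, sub_mem_sub hx hb, add_sub_cancel b x⟩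

theorem exists_addSubgroup_of_two_mul_card_add_lt (hB : 2 * #(B + G) < 3 * #B)
    (hG : 2 * #(B + G) < 3 * #G) :
    ∃ H : AddSubgroup α, (H : Set α).Finite ∧ (H : Set α).ncard ≤ #(B + G) ∧
      (∃ b : α, (B : Set α) ⊆ b +ᵥ (H : Set α)) ∧
      ∃ g : α, (G : Set α) ⊆ g +ᵥ (H : Set α) := by
  rw [add_comm B G] at hG
  obtain ⟨b, hb⟩ : B.Nonempty := card_pos.1 (by omega)
  obtain ⟨g, hg⟩ : G.Nonempty := card_pos.1 (by omega)
  have hBG : B - B = G - G :=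
    (sub_subset_sub_of_two_mul_card_add_lt hG).antisymm (sub_subset_sub_of_two_mul_card_add_lt hB)
  have hrepB : ∀ x ∈ B - B, #B < 2 * #(B ∩ (x +ᵥ B)) := fun x hx ↦
    card_lt_two_mul_card_inter_vadd hB (hBG ▸ hx)
  have hrepG : ∀ x ∈ G - G, #G < 2 * #(G ∩ (x +ᵥ G)) := fun x hx ↦
    card_lt_two_mul_card_inter_vadd hG (hBG ▸ hx)
  have hadd : ∀ x ∈ B - B, ∀ y ∈ B - B, x + y ∈ B - B := fun _ hx _ hy ↦
    add_mem_sub_of_card_lt_two_mul_card_inter_vadd hrepB hx hy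
  have hcard : #(B - B) < #B + #G := by
    have := card_sub_lt_two_mul_card ⟨b, hb⟩ hrepB
    have := card_sub_lt_two_mul_card ⟨g, hg⟩ hrepG
    rw [← hBG] at this
    omega
  let H : AddSubgroup α :=
    { carrier := ↑(B - B)
      add_mem' := fun hx hy ↦ hadd _ hx _ hy
      zero_mem' := by simpa using sub_mem_sub hb hb
      neg_mem' := fun {x} (hx : x ∈ B - B) ↦ show -x ∈ B - B by
        obtain ⟨y, hy, z, hz, rfl⟩ := mem_sub.1 hx
        simpa using sub_mem_sub hz hy }
  have hH : (H : Set α) = ↑(B - B) := rfl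
  refine ⟨H, hH ▸ finite_toSet _, ?_, ⟨b, ?_⟩, g, ?_⟩
  · rw [hH, Set.ncard_coe_finset, ← card_vadd_finset (b + g)]
    exact card_le_card (vadd_subset_add_of_card_lt hadd subset_rfl hBG.ge hcard hb hg)
  · rw [hH, ← coe_vadd_finset]
    exact_mod_cast subset_vadd_sub hb
  · rw [hH, hBG, ← coe_vadd_finset]
    exact_mod_cast subset_vadd_sub hg

end Finset

theorem AddCircle.isAddCyclic_addSubgroup {T : ℝ} (hT : T ≠ 0) (H : AddSubgroup (AddCircle T))
    [Finite H] : IsAddCyclic H := by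
  let f : Multiplicative H →* ℂ :=
    { toFun := fun x ↦ (toCircle (x.toAdd : AddCircle T) : ℂ)
      map_one' := by simp
      map_mul' := fun x y ↦ by simp [toCircle_add] }
  have hf : Function.Injective f := fun x y h ↦ Multiplicative.toAdd.injective <|
    Subtype.val_injective <| injective_toCircle hT <| Circle.coe_injective h
  exact isCyclic_multiplicative_iff.mp (isCyclic_of_injective_ringHom f hf)

theorem stmt_16_general (n : ℕ) (B G R : Set UnitAddCircle)
    (hfinB : B.Finite) (hfinG : G.Finite) (hfinR : R.Finite)
    (hB : B.ncard = n) (hG : G.ncard = n) (hR : 2 * R.ncard < 3 * n)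
    (hsub : B + G ⊆ -R) :
    ∃ (k : ℕ) (H : AddSubgroup UnitAddCircle), 2 * k < 3 * n ∧
      (H : Set UnitAddCircle).ncard = k ∧ IsAddCyclic H ∧
      (∃ b : UnitAddCircle, B ⊆ {b} + (H : Set UnitAddCircle)) ∧
      (∃ g : UnitAddCircle, G ⊆ {g} + (H : Set UnitAddCircle)) := by
  classical
  lift B to Finset UnitAddCircle using hfinB
  lift G to Finset UnitAddCircle using hfinG
  rw [Set.ncard_coe_finset] at hB hG
  have hBG : (B + G).card ≤ R.ncard := by
    rw [← Set.ncard_coe_finset, Finset.coe_add, ← Set.ncard_neg R]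
    exact Set.ncard_le_ncard hsub hfinR.neg
  obtain ⟨H, hHfin, hHcard, ⟨b, hb⟩, g, hg⟩ :=
    Finset.exists_addSubgroup_of_two_mul_card_add_lt (B := B) (G := G) (by omega) (by omega)
  have : Finite H := hHfin
  refine ⟨_, H, by omega, rfl, AddCircle.isAddCyclic_addSubgroup one_ne_zero H,
    ⟨b, ?_⟩, g, ?_⟩
  · rw [Set.singleton_add]; exact hb
  · rw [Set.singleton_add]; exact hg

/-- Let `B, G` be finite subsets of `ℝ/ℤ` with `|B| = |G| = n`, and `R̃ ⊆ ℝ/ℤ` finite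
with `|R̃| < (3/2)n` and `B + G ⊆ -R̃`. Then there exist `k < (3/2)n` and a finite cyclic
subgroup `H` of `ℝ/ℤ` of order `k` such that `B` and `G` are each contained in cosets of
`H`. -/
theorem stmt_16 (n : ℕ) (hn : 0 < n) (B G R : Set UnitAddCircle)
    (hfinB : B.Finite) (hfinG : G.Finite) (hfinR : R.Finite)
    (hB : B.ncard = n) (hG : G.ncard = n) (hR : 2 * R.ncard < 3 * n)
    (hsub : B + G ⊆ -R) :
    ∃ (k : ℕ) (H : AddSubgroup UnitAddCircle), 2 * k < 3 * n ∧
      (H : Set UnitAddCircle).ncard = k ∧ IsAddCyclic H ∧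
      (∃ b : UnitAddCircle, B ⊆ {b} + (H : Set UnitAddCircle)) ∧
      (∃ g : UnitAddCircle, G ⊆ {g} + (H : Set UnitAddCircle)) :=
  stmt_16_general n B G R hfinB hfinG hfinR hB hG hR hsub
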